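/- arXiv:1906.07567 — 2 statements merged into one kernel-verified Lean document; each statement's English description precedes it below -/
import Mathlib

section
/- Under a triangle-like inequality of the form c_{ab} ≤ c_{ac} + c_{dc} + c_{db} for all indices, in a 3×3 assignment problem where the diagonal assignment is optimal with cost c* = c_{11}+c_{22}+c_{33} = 3, and the competitive protocol (with greedy conflicts as described) produces the cyclic assignment with cost c = c_{12}+c_{23}+c_{31}, then c < 9, i.e., c < 3·c*. -/
/-!
Two applications of the four-index inequality, each detouring through a diagonal entry, give
`c₂₀ ≤ c₂₂ + c₁₂ + c₁₀` and `c₁₀ ≤ c₁₁ + c₀₁ + c₀₀`. Hence the cyclic cost is at most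
`2 c₀₁ + 2 c₁₂ + c₀₀ + c₁₁ + c₂₂`, and the greedy conflicts `c₀₁ < c₀₀`, `c₁₂ < c₁₁` bound this
by `3 c₀₀ + 3 c₁₁ + c₂₂ ≤ 3 (c₀₀ + c₁₁ + c₂₂)`.
-/

theorem le_add_of_four_index_le {ι α : Type*} [AddCommMonoid α] [PartialOrder α]
    [IsOrderedAddMonoid α] {c : ι → ι → α}
    (htri : ∀ a b x d : ι, c a b ≤ c a x + c d x + c d b) (i j k : ι) :
    c k i ≤ c k k + c j k + c j j + c i j + c i i :=
  calc c k i ≤ c k k + c j k + c j i := htri k i k j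
    _ ≤ c k k + c j k + (c j j + c i j + c i i) := add_le_add_right (htri j i j i) _
    _ = c k k + c j k + c j j + c i j + c i i := by simp only [add_assoc]

theorem three_by_three_competitive_bound_general (c : Fin 3 → Fin 3 → ℝ)
    (hpos : ∀ i j, 0 ≤ c i j)
    (htri : ∀ a b x d : Fin 3, c a b ≤ c a x + c d x + c d b)
    (hval : c 0 0 + c 1 1 + c 2 2 = 3)
    (hg1 : c 0 1 < c 0 0) (hg2 : c 1 2 < c 1 1) :
    c 0 1 + c 1 2 + c 2 0 < 9 := by
  have hdetour := le_add_of_four_index_le htri 0 1 2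
  calc c 0 1 + c 1 2 + c 2 0 ≤ 2 * c 0 1 + 2 * c 1 2 + (c 0 0 + c 1 1 + c 2 2) := by
        linarith
    _ < 3 * c 0 0 + 3 * c 1 1 + c 2 2 := by linarith
    _ ≤ 3 * (c 0 0 + c 1 1 + c 2 2) := by linarith [hpos 2 2]
    _ = 9 := by rw [hval]; norm_num

/-- 3×3 competitive assignment bound: under the four-index triangle-like
inequality, optimality of the diagonal assignment with cost 3, and the
greedy-conflict conditions, the cyclic competitive assignment has cost
strictly less than 9, i.e. less than 3 times the optimum. -/
theorem three_by_three_competitive_bound (c : Fin 3 → Fin 3 → ℝ)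
    (hpos : ∀ i j, 0 ≤ c i j)
    (htri : ∀ a b x d : Fin 3, c a b ≤ c a x + c d x + c d b)
    (hval : c 0 0 + c 1 1 + c 2 2 = 3)
    (hopt : ∀ σ : Equiv.Perm (Fin 3), σ ≠ 1 →
      c 0 0 + c 1 1 + c 2 2 < c 0 (σ 0) + c 1 (σ 1) + c 2 (σ 2))
    (hg1 : c 0 1 < c 0 0) (hg2 : c 1 2 < c 1 1) (hg3 : c 2 2 < c 2 0) :
    c 0 1 + c 1 2 + c 2 0 < 9 :=
  three_by_three_competitive_bound_general c hpos htri hval hg1 hg2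
end

section
/- Let (x_{ij}) be a feasible solution of the n×n linear assignment problem (each row and column sums to 1, x_{ij} ∈ {0,1}) produced by an ε-complementary-slackness terminating auction: there exist bids B(i,j) ≥ 0 such that for each vehicle i assigned to customer j_i, -c_{i j_i} - B(i, j_i) ≥ max_j (-c_{ij} - B(i,j)) - ε, and each customer's bid is won by exactly one vehicle. Then the total cost Σ_i c_{i j_i} is within n·ε of the optimal assignment cost: Σ_i c_{i j_i} ≤ OPT + n·ε, where OPT = min over permutations σ of Σ_i c_{i σ(i)}. -/
/-!
Sum the ε-complementary slackness inequality of every vehicle `i` against the customer `τ i`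
it receives in an arbitrary assignment `τ`: the costs of `σ` exceed those of `τ` by at most
`n ε` plus the difference of the total bids paid under `τ` and under `σ`. Since every customer
is held by its highest bidder, the bids paid under `σ` dominate those paid under any `τ`, so
that difference is nonpositive.
-/

open Finset

theorem Equiv.Perm.sum_le_sum_of_le_apply_symm {ι M : Type*} [Fintype ι] [AddCommMonoid M]
    [PartialOrder M] [IsOrderedAddMonoid M] (B : ι → ι → M) (σ τ : Equiv.Perm ι)
    (hwin : ∀ j i, B i j ≤ B (σ.symm j) j) :
    ∑ i, B i (τ i) ≤ ∑ i, B i (σ i) :=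
  calc ∑ i, B i (τ i) ≤ ∑ i, B (σ.symm (τ i)) (τ i) := sum_le_sum fun i _ => hwin (τ i) i
    _ = ∑ j, B (σ.symm j) j := Equiv.sum_comp τ fun j => B (σ.symm j) j
    _ = ∑ i, B i (σ i) := by simpa using (Equiv.sum_comp σ fun j => B (σ.symm j) j).symm

theorem sum_add_sum_le_sum_add_sum_add_card_mul {ι : Type*} [Fintype ι] (ε : ℝ)
    (c B : ι → ι → ℝ) (σ τ : Equiv.Perm ι) (hcs : ∀ i j, -c i (σ i) - B i (σ i) ≥ -c i j - B i j - ε) :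
    ∑ i, c i (σ i) + ∑ i, B i (σ i) ≤ ∑ i, c i (τ i) + ∑ i, B i (τ i) + Fintype.card ι * ε := by
  have hrow : ∀ i, c i (σ i) + B i (σ i) ≤ c i (τ i) + B i (τ i) + ε := fun i => by
    linarith [hcs i (τ i)]
  calc ∑ i, c i (σ i) + ∑ i, B i (σ i) = ∑ i, (c i (σ i) + B i (σ i)) := sum_add_distrib.symm
    _ ≤ ∑ i, (c i (τ i) + B i (τ i) + ε) := sum_le_sum fun i _ => hrow i
    _ = ∑ i, c i (τ i) + ∑ i, B i (τ i) + Fintype.card ι * ε := by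
      simp only [sum_add_distrib, sum_const, card_univ, nsmul_eq_mul]

theorem eps_cs_near_optimal_general (n : ℕ) (ε : ℝ)
    (c : Fin n → Fin n → ℝ) (B : Fin n → Fin n → ℝ)
    (σ : Equiv.Perm (Fin n))
    (hwin : ∀ j : Fin n, ∀ i : Fin n, B i j ≤ B (σ.symm j) j)
    (hcs : ∀ i j : Fin n, -c i (σ i) - B i (σ i) ≥ -c i j - B i j - ε) :
    ∀ τ : Equiv.Perm (Fin n),
      ∑ i, c i (σ i) ≤ (∑ i, c i (τ i)) + n * ε := by
  intro τ
  have hbids := σ.sum_le_sum_of_le_apply_symm B τ hwin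
  have hcost := sum_add_sum_le_sum_add_sum_add_card_mul ε c B σ τ hcs
  rw [Fintype.card_fin] at hcost
  linarith

/-- ε-complementary slackness implies near-optimality: if each vehicle `i` is
assigned to customer `σ i` within `ε` of maximizing its net reward
`-c_{ij} - B(i,j)` (with nonnegative bids), then the total assignment cost is
within `n·ε` of the optimal assignment cost. -/
theorem eps_cs_near_optimal (n : ℕ) (ε : ℝ) (hε : 0 ≤ ε)
    (c : Fin n → Fin n → ℝ) (B : Fin n → Fin n → ℝ)
    (hB : ∀ i j, 0 ≤ B i j)
    (σ : Equiv.Perm (Fin n))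
    (hwin : ∀ j : Fin n, ∀ i : Fin n, B i j ≤ B (σ.symm j) j)
    (hcs : ∀ i j : Fin n, -c i (σ i) - B i (σ i) ≥ -c i j - B i j - ε) :
    ∀ τ : Equiv.Perm (Fin n),
      ∑ i, c i (σ i) ≤ (∑ i, c i (τ i)) + n * ε :=
  eps_cs_near_optimal_general n ε c B σ hwin hcs
end
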